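/- arXiv:1512.05970 — 4 statements merged into one kernel-verified Lean document; each statement's English description precedes it below -/
import Mathlib

section
/- Let K be a positive integer and let u : ℝ × ℝ → ℝ^K be a smooth map which is 2π-periodic in its second variable (i.e. u(t, θ + 2π) = u(t, θ) for all t, θ). Suppose that at every point the Laplacian Δu := ∂²u/∂t² + ∂²u/∂θ² is orthogonal (for the Euclidean inner product of ℝ^K) to both partial derivatives ∂u/∂t and ∂u/∂θ. Then the complex-valued function β(t) := ∫₀^{2π} ( |∂u/∂t(t,θ)|² − |∂u/∂θ(t,θ)|² − 2i ⟨∂u/∂t(t,θ), ∂u/∂θ(t,θ)⟩ ) dθ is constant in t. -/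
open Real MeasureTheory

/-- Differentiation under the interval integral for jointly continuous
functions with jointly continuous partial derivative. -/
private lemma hasDerivAt_parametric {F F' : ℝ × ℝ → ℝ} (hF : Continuous F)
    (hF' : Continuous F')
    (hd : ∀ p : ℝ × ℝ, HasDerivAt (fun t => F (t, p.2)) (F' p) p.1)
    (a b t₀ : ℝ) :
    HasDerivAt (fun t => ∫ θ in a..b, F (t, θ)) (∫ θ in a..b, F' (t₀, θ)) t₀ := by
  obtain ⟨M, hM⟩ :=
    (((isCompact_Icc : IsCompact (Set.Icc (t₀ - 1) (t₀ + 1))).prod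
      (isCompact_uIcc (a := a) (b := b))).exists_bound_of_continuousOn hF'.continuousOn)
  have key := intervalIntegral.hasDerivAt_integral_of_dominated_loc_of_deriv_le
    (F := fun x θ => F (x, θ)) (F' := fun x θ => F' (x, θ)) (x₀ := t₀)
    (s := Metric.ball t₀ 1) (a := a) (b := b) (μ := volume) (bound := fun _ => M)
    (Metric.ball_mem_nhds t₀ one_pos)
    (Filter.Eventually.of_forall fun x =>
      ((hF.comp (Continuous.prodMk_right x))).aestronglyMeasurable)
    ((hF.comp (Continuous.prodMk_right t₀)).intervalIntegrable a b)
    ((hF'.comp (Continuous.prodMk_right t₀)).aestronglyMeasurable)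
    (Filter.Eventually.of_forall fun θ hθ x hx => by
      refine hM (x, θ) ⟨?_, Set.uIoc_subset_uIcc hθ⟩
      have hx' := abs_lt.1 (by simpa [Metric.mem_ball, Real.dist_eq] using hx)
      exact ⟨by linarith [hx'.1], by linarith [hx'.2]⟩)
    (intervalIntegrable_const)
    (Filter.Eventually.of_forall fun θ _ x _ => hd (x, θ))
  exact key.2

/-- Lemma 3.2 (full complex Hopf differential form): for a smooth map
`u : ℝ × ℝ → ℝ^K`, `2π`-periodic in the second variable, whose Laplacian
`∂²u/∂t² + ∂²u/∂θ²` is everywhere orthogonal to both `∂u/∂t` and `∂u/∂θ`,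
the function `β(t) = ∫₀^{2π} (|u_t|² − |u_θ|² − 2i⟨u_t, u_θ⟩) dθ`
is independent of `t`. -/
theorem constancy_of_beta
    (K : ℕ) (hK : 0 < K)
    (u : ℝ × ℝ → EuclideanSpace ℝ (Fin K))
    (hu : ContDiff ℝ (⊤ : ℕ∞) u)
    (hper : ∀ t θ : ℝ, u (t, θ + 2 * Real.pi) = u (t, θ))
    (horth_t : ∀ p : ℝ × ℝ,
      (inner ℝ
        (fderiv ℝ (fun q => fderiv ℝ u q (1, 0)) p (1, 0)
          + fderiv ℝ (fun q => fderiv ℝ u q (0, 1)) p (0, 1))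
        (fderiv ℝ u p (1, 0)) : ℝ) = 0)
    (horth_θ : ∀ p : ℝ × ℝ,
      (inner ℝ
        (fderiv ℝ (fun q => fderiv ℝ u q (1, 0)) p (1, 0)
          + fderiv ℝ (fun q => fderiv ℝ u q (0, 1)) p (0, 1))
        (fderiv ℝ u p (0, 1)) : ℝ) = 0) :
    ∀ t₁ t₂ : ℝ,
      (∫ θ in (0:ℝ)..(2 * Real.pi),
        (((‖fderiv ℝ u (t₁, θ) (1, 0)‖ ^ 2 - ‖fderiv ℝ u (t₁, θ) (0, 1)‖ ^ 2 : ℝ) : ℂ)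
          - 2 * Complex.I *
            ((inner ℝ (fderiv ℝ u (t₁, θ) (1, 0)) (fderiv ℝ u (t₁, θ) (0, 1)) : ℝ) : ℂ)))
      = ∫ θ in (0:ℝ)..(2 * Real.pi),
        (((‖fderiv ℝ u (t₂, θ) (1, 0)‖ ^ 2 - ‖fderiv ℝ u (t₂, θ) (0, 1)‖ ^ 2 : ℝ) : ℂ)
          - 2 * Complex.I *
            ((inner ℝ (fderiv ℝ u (t₂, θ) (1, 0)) (fderiv ℝ u (t₂, θ) (0, 1)) : ℝ) : ℂ)) := by
  intro t₁ t₂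
  classical
  -- basic differentiability
  have hud : Differentiable ℝ u := hu.differentiable (by simp)
  have hD : ContDiff ℝ (⊤ : ℕ∞) (fderiv ℝ u) := hu.fderiv_right (by simp)
  have hDd : Differentiable ℝ (fderiv ℝ u) := hD.differentiable (by simp)
  set U₁ : ℝ × ℝ → EuclideanSpace ℝ (Fin K) := fun p => fderiv ℝ u p (1, 0) with hU₁def
  set U₂ : ℝ × ℝ → EuclideanSpace ℝ (Fin K) := fun p => fderiv ℝ u p (0, 1) with hU₂def
  have hU₁ : ContDiff ℝ (⊤ : ℕ∞) U₁ := hD.clm_apply contDiff_const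
  have hU₂ : ContDiff ℝ (⊤ : ℕ∞) U₂ := hD.clm_apply contDiff_const
  have hU₁d : Differentiable ℝ U₁ := hU₁.differentiable (by simp)
  have hU₂d : Differentiable ℝ U₂ := hU₂.differentiable (by simp)
  -- fderiv of U₁, U₂ in terms of the second derivative of u
  have hfdU : ∀ (v : ℝ × ℝ) (p w : ℝ × ℝ),
      fderiv ℝ (fun q => fderiv ℝ u q v) p w = fderiv ℝ (fderiv ℝ u) p w v := by
    intro v p w
    have h : HasFDerivAt (fun q => fderiv ℝ u q v)
        ((ContinuousLinearMap.apply ℝ (EuclideanSpace ℝ (Fin K)) v).comp (fderiv ℝ (fderiv ℝ u) p)) p :=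
      (ContinuousLinearMap.apply ℝ (EuclideanSpace ℝ (Fin K)) v).hasFDerivAt.comp p (hDd p).hasFDerivAt
    rw [h.fderiv]; rfl
  -- symmetry of mixed partials
  have hmixed : ∀ p : ℝ × ℝ, fderiv ℝ U₁ p (0, 1) = fderiv ℝ U₂ p (1, 0) := by
    intro p
    have hsymm := second_derivative_symmetric (f := u) (f' := fderiv ℝ u)
      (f'' := fderiv ℝ (fderiv ℝ u) p) (fun y => (hud y).hasFDerivAt)
      (hDd p).hasFDerivAt ((0 : ℝ), (1 : ℝ)) ((1 : ℝ), (0 : ℝ))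
    rw [hU₁def, hU₂def, hfdU, hfdU]
    exact hsymm
  -- the two real scalar fields
  set f : ℝ × ℝ → ℝ := fun p => inner ℝ (U₁ p) (U₁ p) - inner ℝ (U₂ p) (U₂ p) with hfdef
  set g : ℝ × ℝ → ℝ := fun p => inner ℝ (U₁ p) (U₂ p) with hgdef
  have hfc : ContDiff ℝ (⊤ : ℕ∞) f := (hU₁.inner ℝ hU₁).sub (hU₂.inner ℝ hU₂)
  have hgc : ContDiff ℝ (⊤ : ℕ∞) g := hU₁.inner ℝ hU₂
  have hfd : Differentiable ℝ f := hfc.differentiable (by simp)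
  have hgd : Differentiable ℝ g := hgc.differentiable (by simp)
  -- derivatives of f and g
  have hfderiv_f : ∀ (p v : ℝ × ℝ), fderiv ℝ f p v =
      2 * inner ℝ (fderiv ℝ U₁ p v) (U₁ p) - 2 * inner ℝ (fderiv ℝ U₂ p v) (U₂ p) := by
    intro p v
    have h1 : fderiv ℝ f p v =
        fderiv ℝ (fun p => (inner ℝ (U₁ p) (U₁ p) : ℝ)) p v
          - fderiv ℝ (fun p => (inner ℝ (U₂ p) (U₂ p) : ℝ)) p v := by
      rw [hfdef]
      rw [fderiv_fun_sub ((hU₁d p).inner ℝ (hU₁d p)) ((hU₂d p).inner ℝ (hU₂d p))]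
      rfl
    rw [h1, fderiv_inner_apply (𝕜 := ℝ) (hU₁d p) (hU₁d p) v,
      fderiv_inner_apply (𝕜 := ℝ) (hU₂d p) (hU₂d p) v,
      real_inner_comm (U₁ p) (fderiv ℝ U₁ p v),
      real_inner_comm (U₂ p) (fderiv ℝ U₂ p v)]
    ring
  have hfderiv_g : ∀ (p v : ℝ × ℝ), fderiv ℝ g p v =
      inner ℝ (U₁ p) (fderiv ℝ U₂ p v) + inner ℝ (fderiv ℝ U₁ p v) (U₂ p) := by
    intro p v
    rw [hgdef, fderiv_inner_apply (𝕜 := ℝ) (hU₁d p) (hU₂d p) v]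
  -- the orthogonality hypotheses, in terms of U₁, U₂
  have horth_t' : ∀ p : ℝ × ℝ,
      (inner ℝ (fderiv ℝ U₁ p (1, 0)) (U₁ p) : ℝ)
        + inner ℝ (fderiv ℝ U₂ p (0, 1)) (U₁ p) = 0 := by
    intro p
    have := horth_t p
    rw [inner_add_left] at this
    exact this
  have horth_θ' : ∀ p : ℝ × ℝ,
      (inner ℝ (fderiv ℝ U₁ p (1, 0)) (U₂ p) : ℝ)
        + inner ℝ (fderiv ℝ U₂ p (0, 1)) (U₂ p) = 0 := by
    intro p
    have := horth_θ p
    rw [inner_add_left] at this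
    exact this
  -- Cauchy–Riemann type identities
  have key1 : ∀ p : ℝ × ℝ, fderiv ℝ f p (1, 0) = -(2 * fderiv ℝ g p (0, 1)) := by
    intro p
    rw [hfderiv_f p (1, 0), hfderiv_g p (0, 1), ← hmixed p]
    linarith [horth_t' p, real_inner_comm (U₁ p) (fderiv ℝ U₂ p (0, 1))]
  have key2 : ∀ p : ℝ × ℝ, 2 * fderiv ℝ g p (1, 0) = fderiv ℝ f p (0, 1) := by
    intro p
    rw [hfderiv_f p (0, 1), hfderiv_g p (1, 0), ← hmixed p]
    linarith [horth_θ' p, real_inner_comm (U₁ p) (fderiv ℝ U₁ p (0, 1))]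
  -- periodicity in θ
  have hDper : ∀ p : ℝ × ℝ, fderiv ℝ u (p + ((0 : ℝ), 2 * Real.pi)) = fderiv ℝ u p := by
    intro p
    have hT : (fun q : ℝ × ℝ => u (q + ((0 : ℝ), 2 * Real.pi))) = u := by
      funext q
      have hq : q + ((0 : ℝ), 2 * Real.pi) = (q.1, q.2 + 2 * Real.pi) := by
        ext <;> simp
      rw [hq, hper q.1 q.2]
    have h : HasFDerivAt (fun q : ℝ × ℝ => u (q + ((0 : ℝ), 2 * Real.pi)))
        ((fderiv ℝ u (p + ((0 : ℝ), 2 * Real.pi))).comp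
          (ContinuousLinearMap.id ℝ (ℝ × ℝ))) p :=
      (hud _).hasFDerivAt.comp p ((hasFDerivAt_id p).add_const _)
    rw [hT] at h
    have h2 := h.fderiv
    rw [ContinuousLinearMap.comp_id] at h2
    exact h2.symm
  have hfper : ∀ t : ℝ, f (t, 2 * Real.pi) = f (t, 0) := by
    intro t
    have := hDper (t, 0)
    have h2 : ((t, 0) + ((0 : ℝ), 2 * Real.pi)) = ((t, 2 * Real.pi) : ℝ × ℝ) := by
      simp [Prod.ext_iff]
    rw [h2] at this
    simp only [hfdef, hU₁def, hU₂def, this]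
  have hgper : ∀ t : ℝ, g (t, 2 * Real.pi) = g (t, 0) := by
    intro t
    have := hDper (t, 0)
    have h2 : ((t, 0) + ((0 : ℝ), 2 * Real.pi)) = ((t, 2 * Real.pi) : ℝ × ℝ) := by
      simp [Prod.ext_iff]
    rw [h2] at this
    simp only [hgdef, hU₁def, hU₂def, this]
  -- directional derivatives as one-variable derivatives
  have hline_t : ∀ (F : ℝ × ℝ → ℝ), Differentiable ℝ F → ∀ t θ : ℝ,
      HasDerivAt (fun s => F (s, θ)) (fderiv ℝ F (t, θ) (1, 0)) t := by
    intro F hF t θ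
    have hc : HasDerivAt (fun s : ℝ => ((s, θ) : ℝ × ℝ)) ((1 : ℝ), (0 : ℝ)) t :=
      (hasDerivAt_id t).prodMk (hasDerivAt_const t θ)
    exact (hF (t, θ)).hasFDerivAt.comp_hasDerivAt t hc
  have hline_θ : ∀ (F : ℝ × ℝ → ℝ), Differentiable ℝ F → ∀ t θ : ℝ,
      HasDerivAt (fun s => F (t, s)) (fderiv ℝ F (t, θ) (0, 1)) θ := by
    intro F hF t θ
    have hc : HasDerivAt (fun s : ℝ => ((t, s) : ℝ × ℝ)) ((0 : ℝ), (1 : ℝ)) θ :=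
      (hasDerivAt_const θ t).prodMk (hasDerivAt_id θ)
    exact (hF (t, θ)).hasFDerivAt.comp_hasDerivAt θ hc
  -- continuity of the partial derivative fields
  have hcont_df : ∀ v : ℝ × ℝ, Continuous (fun p => fderiv ℝ f p v) :=
    fun v => ContDiff.continuous (n := (⊤ : ℕ∞)) ((hfc.fderiv_right (by simp)).clm_apply contDiff_const)
  have hcont_dg : ∀ v : ℝ × ℝ, Continuous (fun p => fderiv ℝ g p v) :=
    fun v => ContDiff.continuous (n := (⊤ : ℕ∞)) ((hgc.fderiv_right (by simp)).clm_apply contDiff_const)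
  -- the θ-integrals of ∂_θ f and ∂_θ g vanish
  have hint_fθ : ∀ t : ℝ, (∫ θ in (0:ℝ)..(2 * Real.pi), fderiv ℝ f (t, θ) (0, 1)) = 0 := by
    intro t
    rw [intervalIntegral.integral_eq_sub_of_hasDerivAt
      (fun θ _ => hline_θ f hfd t θ)
      (((hcont_df (0, 1)).comp (Continuous.prodMk_right t)).intervalIntegrable _ _)]
    rw [hfper t, sub_self]
  have hint_gθ : ∀ t : ℝ, (∫ θ in (0:ℝ)..(2 * Real.pi), fderiv ℝ g (t, θ) (0, 1)) = 0 := by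
    intro t
    rw [intervalIntegral.integral_eq_sub_of_hasDerivAt
      (fun θ _ => hline_θ g hgd t θ)
      (((hcont_dg (0, 1)).comp (Continuous.prodMk_right t)).intervalIntegrable _ _)]
    rw [hgper t, sub_self]
  -- the integrals of f and g over a circle have zero derivative in t
  have hIf : ∀ t₀ : ℝ, HasDerivAt (fun t => ∫ θ in (0:ℝ)..(2 * Real.pi), f (t, θ)) 0 t₀ := by
    intro t₀
    have h := hasDerivAt_parametric (F := f) (F' := fun p => fderiv ℝ f p (1, 0))
      hfc.continuous (hcont_df (1, 0)) (fun p => hline_t f hfd p.1 p.2) 0 (2 * Real.pi) t₀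
    have hz : (∫ θ in (0:ℝ)..(2 * Real.pi), fderiv ℝ f (t₀, θ) (1, 0)) = 0 := by
      rw [intervalIntegral.integral_congr (g := fun θ => -(2 * fderiv ℝ g (t₀, θ) (0, 1)))
        (fun θ _ => key1 (t₀, θ))]
      rw [intervalIntegral.integral_neg, intervalIntegral.integral_const_mul, hint_gθ t₀]
      ring
    rwa [hz] at h
  have hIg : ∀ t₀ : ℝ, HasDerivAt (fun t => ∫ θ in (0:ℝ)..(2 * Real.pi), g (t, θ)) 0 t₀ := by
    intro t₀
    have h := hasDerivAt_parametric (F := g) (F' := fun p => fderiv ℝ g p (1, 0))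
      hgc.continuous (hcont_dg (1, 0)) (fun p => hline_t g hgd p.1 p.2) 0 (2 * Real.pi) t₀
    have hz : (∫ θ in (0:ℝ)..(2 * Real.pi), fderiv ℝ g (t₀, θ) (1, 0)) = 0 := by
      have hcongr : ∀ θ : ℝ, fderiv ℝ g (t₀, θ) (1, 0) = (1/2) * fderiv ℝ f (t₀, θ) (0, 1) := by
        intro θ
        have := key2 (t₀, θ)
        linarith
      rw [intervalIntegral.integral_congr (g := fun θ => (1/2) * fderiv ℝ f (t₀, θ) (0, 1))
        (fun θ _ => hcongr θ)]
      rw [intervalIntegral.integral_const_mul, hint_fθ t₀]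
      ring
    rwa [hz] at h
  -- hence those integrals are constant
  have hconst_f : (∫ θ in (0:ℝ)..(2 * Real.pi), f (t₁, θ))
      = ∫ θ in (0:ℝ)..(2 * Real.pi), f (t₂, θ) :=
    is_const_of_deriv_eq_zero (fun t => (hIf t).differentiableAt)
      (fun t => (hIf t).deriv) t₁ t₂
  have hconst_g : (∫ θ in (0:ℝ)..(2 * Real.pi), g (t₁, θ))
      = ∫ θ in (0:ℝ)..(2 * Real.pi), g (t₂, θ) :=
    is_const_of_deriv_eq_zero (fun t => (hIg t).differentiableAt)
      (fun t => (hIg t).deriv) t₁ t₂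
  -- assembling the complex integral
  have hsplit : ∀ t : ℝ,
      (∫ θ in (0:ℝ)..(2 * Real.pi),
        (((‖fderiv ℝ u (t, θ) (1, 0)‖ ^ 2 - ‖fderiv ℝ u (t, θ) (0, 1)‖ ^ 2 : ℝ) : ℂ)
          - 2 * Complex.I *
            ((inner ℝ (fderiv ℝ u (t, θ) (1, 0)) (fderiv ℝ u (t, θ) (0, 1)) : ℝ) : ℂ)))
      = (((∫ θ in (0:ℝ)..(2 * Real.pi), f (t, θ)) : ℝ) : ℂ)
        - 2 * Complex.I * (((∫ θ in (0:ℝ)..(2 * Real.pi), g (t, θ)) : ℝ) : ℂ) := by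
    intro t
    have hc1 : Continuous fun θ : ℝ => ((f (t, θ) : ℝ) : ℂ) :=
      Complex.continuous_ofReal.comp (hfc.continuous.comp (Continuous.prodMk_right t))
    have hc2 : Continuous fun θ : ℝ => 2 * Complex.I * ((g (t, θ) : ℝ) : ℂ) :=
      continuous_const.mul
        (Complex.continuous_ofReal.comp (hgc.continuous.comp (Continuous.prodMk_right t)))
    have hee : ∀ θ : ℝ,
        (((‖fderiv ℝ u (t, θ) (1, 0)‖ ^ 2 - ‖fderiv ℝ u (t, θ) (0, 1)‖ ^ 2 : ℝ) : ℂ)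
          - 2 * Complex.I *
            ((inner ℝ (fderiv ℝ u (t, θ) (1, 0)) (fderiv ℝ u (t, θ) (0, 1)) : ℝ) : ℂ))
        = ((f (t, θ) : ℝ) : ℂ) - 2 * Complex.I * ((g (t, θ) : ℝ) : ℂ) := by
      intro θ
      have h1 : f (t, θ) = ‖fderiv ℝ u (t, θ) (1, 0)‖ ^ 2 - ‖fderiv ℝ u (t, θ) (0, 1)‖ ^ 2 := by
        simp only [hfdef, hU₁def, hU₂def, real_inner_self_eq_norm_sq]
      have h2 : g (t, θ) = inner ℝ (fderiv ℝ u (t, θ) (1, 0)) (fderiv ℝ u (t, θ) (0, 1)) := rfl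
      rw [h1, h2]
    rw [intervalIntegral.integral_congr (fun θ _ => hee θ)]
    rw [intervalIntegral.integral_sub (hc1.intervalIntegrable _ _)
      (hc2.intervalIntegrable _ _)]
    rw [intervalIntegral.integral_const_mul]
    rw [intervalIntegral.integral_ofReal, intervalIntegral.integral_ofReal]
  rw [hsplit t₁, hsplit t₂, hconst_f, hconst_g]
end

section
/- Let K be a positive integer and let u : ℝ × ℝ → ℝ^K be a smooth map which is 2π-periodic in its second variable. Suppose that at every point ⟨∂²u/∂t² + ∂²u/∂θ², ∂u/∂t⟩ = 0, where ⟨·,·⟩ is the Euclidean inner product on ℝ^K. Then the function t ↦ ∫₀^{2π} ( |∂u/∂t(t,θ)|² − |∂u/∂θ(t,θ)|² ) dθ is constant. -/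
open Real MeasureTheory

noncomputable section ConstReAux

variable {K : ℕ}

/-- The directional derivative of `u` in the direction `v`. -/
def cre_pd (u : ℝ × ℝ → EuclideanSpace ℝ (Fin K)) (v p : ℝ × ℝ) :
    EuclideanSpace ℝ (Fin K) := fderiv ℝ u p v

lemma cre_pd_contDiff {u : ℝ × ℝ → EuclideanSpace ℝ (Fin K)}
    (hu : ContDiff ℝ (⊤ : ℕ∞) u) (v : ℝ × ℝ) : ContDiff ℝ (⊤ : ℕ∞) (cre_pd u v) :=
  (hu.fderiv_right (by simp)).clm_apply contDiff_const

lemma cre_slice_t {F : Type*} [NormedAddCommGroup F] [NormedSpace ℝ F]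
    {g : ℝ × ℝ → F} (hg : Differentiable ℝ g) (t θ : ℝ) :
    HasDerivAt (fun s => g (s, θ)) (fderiv ℝ g (t, θ) (1, 0)) t :=
  (hg (t, θ)).hasFDerivAt.comp_hasDerivAt t
    ((hasDerivAt_id t).prodMk (hasDerivAt_const t θ))

lemma cre_slice_th {F : Type*} [NormedAddCommGroup F] [NormedSpace ℝ F]
    {g : ℝ × ℝ → F} (hg : Differentiable ℝ g) (t θ : ℝ) :
    HasDerivAt (fun s => g (t, s)) (fderiv ℝ g (t, θ) (0, 1)) θ :=
  (hg (t, θ)).hasFDerivAt.comp_hasDerivAt θ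
    ((hasDerivAt_const θ t).prodMk (hasDerivAt_id θ))

/-- Symmetry of second derivatives (Schwarz). -/
lemma cre_schwarz {u : ℝ × ℝ → EuclideanSpace ℝ (Fin K)}
    (hu : ContDiff ℝ (⊤ : ℕ∞) u) (p v w : ℝ × ℝ) :
    fderiv ℝ (cre_pd u v) p w = fderiv ℝ (cre_pd u w) p v := by
  have hdiff : Differentiable ℝ u := hu.differentiable (by simp)
  have hfd : ContDiff ℝ (⊤ : ℕ∞) (fderiv ℝ u) := hu.fderiv_right (by simp)
  have h1 : ∀ x : ℝ × ℝ, fderiv ℝ (cre_pd u x) p =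
      (fderiv ℝ (fderiv ℝ u) p).flip x := by
    intro x
    have : fderiv ℝ (fun q => (fderiv ℝ u q) x) p
        = (fderiv ℝ (fderiv ℝ u) p).flip x := by
      rw [fderiv_clm_apply ((hfd.differentiable (by simp)) p) (differentiableAt_const x)]
      simp
    exact this
  rw [h1 v, h1 w]
  have hsymm := second_derivative_symmetric
    (f := u) (f' := fderiv ℝ u) (f'' := fderiv ℝ (fderiv ℝ u) p) (x := p)
    (fun y => (hdiff y).hasFDerivAt)
    ((hfd.differentiable (by simp) p).hasFDerivAt) v w
  simpa using hsymm.symm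

/-- Periodicity of the derivative. -/
lemma cre_fderiv_per {u : ℝ × ℝ → EuclideanSpace ℝ (Fin K)}
    (hu : Differentiable ℝ u)
    (hper : ∀ t θ : ℝ, u (t, θ + 2 * Real.pi) = u (t, θ)) (t θ : ℝ) :
    fderiv ℝ u (t, θ + 2 * Real.pi) = fderiv ℝ u (t, θ) := by
  have hfun : (fun p : ℝ × ℝ => u (p + ((0 : ℝ), 2 * Real.pi))) = u := by
    funext p
    have : p + ((0 : ℝ), 2 * Real.pi) = (p.1, p.2 + 2 * Real.pi) := by
      ext <;> simp
    rw [this, hper p.1 p.2]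
  have hd : HasFDerivAt (fun p : ℝ × ℝ => u (p + ((0 : ℝ), 2 * Real.pi)))
      (fderiv ℝ u ((t, θ) + ((0 : ℝ), 2 * Real.pi))) (t, θ) := by
    have := ((hu _).hasFDerivAt.comp (t, θ)
      ((hasFDerivAt_id ((t, θ) : ℝ × ℝ)).add_const ((0 : ℝ), 2 * Real.pi)))
    simpa [Function.comp_def] using this
  rw [hfun] at hd
  have h2 : ((t, θ) + ((0 : ℝ), 2 * Real.pi) : ℝ × ℝ) = (t, θ + 2 * Real.pi) := by
    ext <;> simp
  rw [h2] at hd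
  exact hd.fderiv.symm

/-- the integrand `|u_t|² - |u_θ|²`. -/
def cre_ff (u : ℝ × ℝ → EuclideanSpace ℝ (Fin K)) (p : ℝ × ℝ) : ℝ :=
  ‖cre_pd u (1, 0) p‖ ^ 2 - ‖cre_pd u (0, 1) p‖ ^ 2

/-- its `t`-derivative. -/
def cre_ft (u : ℝ × ℝ → EuclideanSpace ℝ (Fin K)) (p : ℝ × ℝ) : ℝ :=
  ((inner ℝ (cre_pd u (1, 0) p) (fderiv ℝ (cre_pd u (1, 0)) p (1, 0)) : ℝ)
    + (inner ℝ (fderiv ℝ (cre_pd u (1, 0)) p (1, 0)) (cre_pd u (1, 0) p) : ℝ))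
  - ((inner ℝ (cre_pd u (0, 1) p) (fderiv ℝ (cre_pd u (0, 1)) p (1, 0)) : ℝ)
    + (inner ℝ (fderiv ℝ (cre_pd u (0, 1)) p (1, 0)) (cre_pd u (0, 1) p) : ℝ))

/-- the auxiliary function `-2⟨u_θ, u_t⟩`. -/
def cre_hh (u : ℝ × ℝ → EuclideanSpace ℝ (Fin K)) (p : ℝ × ℝ) : ℝ :=
  -2 * (inner ℝ (cre_pd u (0, 1) p) (cre_pd u (1, 0) p) : ℝ)

/-- its `θ`-derivative. -/
def cre_hth (u : ℝ × ℝ → EuclideanSpace ℝ (Fin K)) (p : ℝ × ℝ) : ℝ :=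
  -2 * ((inner ℝ (cre_pd u (0, 1) p) (fderiv ℝ (cre_pd u (1, 0)) p (0, 1)) : ℝ)
    + (inner ℝ (fderiv ℝ (cre_pd u (0, 1)) p (0, 1)) (cre_pd u (1, 0) p) : ℝ))

lemma cre_hasDerivAt_ff {u : ℝ × ℝ → EuclideanSpace ℝ (Fin K)}
    (hu : ContDiff ℝ (⊤ : ℕ∞) u) (t θ : ℝ) :
    HasDerivAt (fun s => cre_ff u (s, θ)) (cre_ft u (t, θ)) t := by
  have d1 : Differentiable ℝ (cre_pd u (1, 0)) :=
    (cre_pd_contDiff hu _).differentiable (by simp)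
  have d2 : Differentiable ℝ (cre_pd u (0, 1)) :=
    (cre_pd_contDiff hu _).differentiable (by simp)
  have h1 := cre_slice_t d1 t θ
  have h2 := cre_slice_t d2 t θ
  have := (h1.inner ℝ h1).sub (h2.inner ℝ h2)
  simpa only [cre_ff, cre_ft, real_inner_self_eq_norm_sq, Pi.sub_def] using this

lemma cre_hasDerivAt_hh {u : ℝ × ℝ → EuclideanSpace ℝ (Fin K)}
    (hu : ContDiff ℝ (⊤ : ℕ∞) u) (t θ : ℝ) :
    HasDerivAt (fun s => cre_hh u (t, s)) (cre_hth u (t, θ)) θ := by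
  have d1 : Differentiable ℝ (cre_pd u (1, 0)) :=
    (cre_pd_contDiff hu _).differentiable (by simp)
  have d2 : Differentiable ℝ (cre_pd u (0, 1)) :=
    (cre_pd_contDiff hu _).differentiable (by simp)
  have h1 := cre_slice_th d1 t θ
  have h2 := cre_slice_th d2 t θ
  have i := (h2.inner ℝ h1).const_mul (-2 : ℝ)
  simpa only [cre_hh, cre_hth] using i

lemma cre_ft_eq_hth {u : ℝ × ℝ → EuclideanSpace ℝ (Fin K)}
    (hu : ContDiff ℝ (⊤ : ℕ∞) u)
    (horth : ∀ p : ℝ × ℝ,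
      (inner ℝ
        (fderiv ℝ (fun q => fderiv ℝ u q (1, 0)) p (1, 0)
          + fderiv ℝ (fun q => fderiv ℝ u q (0, 1)) p (0, 1))
        (fderiv ℝ u p (1, 0)) : ℝ) = 0)
    (p : ℝ × ℝ) : cre_ft u p = cre_hth u p := by
  have ho : (inner ℝ
      (fderiv ℝ (cre_pd u (1, 0)) p (1, 0) + fderiv ℝ (cre_pd u (0, 1)) p (0, 1))
      (cre_pd u (1, 0) p) : ℝ) = 0 := horth p
  rw [inner_add_left] at ho
  have hs : fderiv ℝ (cre_pd u (0, 1)) p (1, 0) = fderiv ℝ (cre_pd u (1, 0)) p (0, 1) :=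
    cre_schwarz hu p (0, 1) (1, 0)
  unfold cre_ft cre_hth
  rw [hs]
  have h1 : (inner ℝ (cre_pd u (1, 0) p) (fderiv ℝ (cre_pd u (1, 0)) p (1, 0)) : ℝ)
      = inner ℝ (fderiv ℝ (cre_pd u (1, 0)) p (1, 0)) (cre_pd u (1, 0) p) :=
    real_inner_comm _ _
  have h2 : (inner ℝ (cre_pd u (0, 1) p) (fderiv ℝ (cre_pd u (1, 0)) p (0, 1)) : ℝ)
      = inner ℝ (fderiv ℝ (cre_pd u (1, 0)) p (0, 1)) (cre_pd u (0, 1) p) :=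
    real_inner_comm _ _
  linarith [ho, h1, h2]

lemma cre_ft_cont {u : ℝ × ℝ → EuclideanSpace ℝ (Fin K)}
    (hu : ContDiff ℝ (⊤ : ℕ∞) u) : Continuous (cre_ft u) := by
  have c1 := (cre_pd_contDiff hu (1, 0)).continuous
  have c2 := (cre_pd_contDiff hu (0, 1)).continuous
  have c3' : ContDiff ℝ (⊤ : ℕ∞) fun p => fderiv ℝ (cre_pd u (1, 0)) p (1, 0) :=
    ((cre_pd_contDiff hu (1, 0)).fderiv_right (by simp)).clm_apply contDiff_const
  have c3 : Continuous fun p => fderiv ℝ (cre_pd u (1, 0)) p (1, 0) := c3'.continuous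
  have c4' : ContDiff ℝ (⊤ : ℕ∞) fun p => fderiv ℝ (cre_pd u (0, 1)) p (1, 0) :=
    ((cre_pd_contDiff hu (0, 1)).fderiv_right (by simp)).clm_apply contDiff_const
  have c4 : Continuous fun p => fderiv ℝ (cre_pd u (0, 1)) p (1, 0) := c4'.continuous
  exact ((c1.inner c3).add (c3.inner c1)).sub ((c2.inner c4).add (c4.inner c2))

lemma cre_hth_cont {u : ℝ × ℝ → EuclideanSpace ℝ (Fin K)}
    (hu : ContDiff ℝ (⊤ : ℕ∞) u) : Continuous (cre_hth u) := by
  have c1 := (cre_pd_contDiff hu (1, 0)).continuous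
  have c2 := (cre_pd_contDiff hu (0, 1)).continuous
  have c5' : ContDiff ℝ (⊤ : ℕ∞) fun p => fderiv ℝ (cre_pd u (1, 0)) p (0, 1) :=
    ((cre_pd_contDiff hu (1, 0)).fderiv_right (by simp)).clm_apply contDiff_const
  have c5 : Continuous fun p => fderiv ℝ (cre_pd u (1, 0)) p (0, 1) := c5'.continuous
  have c6' : ContDiff ℝ (⊤ : ℕ∞) fun p => fderiv ℝ (cre_pd u (0, 1)) p (0, 1) :=
    ((cre_pd_contDiff hu (0, 1)).fderiv_right (by simp)).clm_apply contDiff_const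
  have c6 : Continuous fun p => fderiv ℝ (cre_pd u (0, 1)) p (0, 1) := c6'.continuous
  exact continuous_const.mul ((c2.inner c5).add (c6.inner c1))

lemma cre_ff_cont {u : ℝ × ℝ → EuclideanSpace ℝ (Fin K)}
    (hu : ContDiff ℝ (⊤ : ℕ∞) u) : Continuous (cre_ff u) := by
  have c1 := (cre_pd_contDiff hu (1, 0)).continuous
  have c2 := (cre_pd_contDiff hu (0, 1)).continuous
  exact (c1.norm.pow 2).sub (c2.norm.pow 2)

lemma cre_hh_per {u : ℝ × ℝ → EuclideanSpace ℝ (Fin K)}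
    (hu : Differentiable ℝ u)
    (hper : ∀ t θ : ℝ, u (t, θ + 2 * Real.pi) = u (t, θ)) (t : ℝ) :
    cre_hh u (t, 2 * Real.pi) = cre_hh u (t, 0) := by
  have h := cre_fderiv_per hu hper t 0
  rw [zero_add] at h
  simp only [cre_hh, cre_pd, h]

end ConstReAux

/-- Real part of Lemma 3.2: for a smooth map `u : ℝ × ℝ → ℝ^K`, `2π`-periodic in
the second variable, whose Laplacian `∂²u/∂t² + ∂²u/∂θ²` is everywhere orthogonal
to `∂u/∂t`, the function `t ↦ ∫₀^{2π} (|u_t|² − |u_θ|²) dθ` is constant. -/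
theorem constancy_of_re_beta
    (K : ℕ) (hK : 0 < K)
    (u : ℝ × ℝ → EuclideanSpace ℝ (Fin K))
    (hu : ContDiff ℝ (⊤ : ℕ∞) u)
    (hper : ∀ t θ : ℝ, u (t, θ + 2 * Real.pi) = u (t, θ))
    (horth : ∀ p : ℝ × ℝ,
      (inner ℝ
        (fderiv ℝ (fun q => fderiv ℝ u q (1, 0)) p (1, 0)
          + fderiv ℝ (fun q => fderiv ℝ u q (0, 1)) p (0, 1))
        (fderiv ℝ u p (1, 0)) : ℝ) = 0) :
    ∀ t₁ t₂ : ℝ,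
      (∫ θ in (0:ℝ)..(2 * Real.pi),
        (‖fderiv ℝ u (t₁, θ) (1, 0)‖ ^ 2 - ‖fderiv ℝ u (t₁, θ) (0, 1)‖ ^ 2))
      = ∫ θ in (0:ℝ)..(2 * Real.pi),
        (‖fderiv ℝ u (t₂, θ) (1, 0)‖ ^ 2 - ‖fderiv ℝ u (t₂, θ) (0, 1)‖ ^ 2) := by
  intro t₁ t₂
  suffices H : ∀ a b : ℝ, a ≤ b →
      (∫ θ in (0:ℝ)..(2 * Real.pi),
        (‖fderiv ℝ u (a, θ) (1, 0)‖ ^ 2 - ‖fderiv ℝ u (a, θ) (0, 1)‖ ^ 2))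
      = ∫ θ in (0:ℝ)..(2 * Real.pi),
        (‖fderiv ℝ u (b, θ) (1, 0)‖ ^ 2 - ‖fderiv ℝ u (b, θ) (0, 1)‖ ^ 2) by
    rcases le_total t₁ t₂ with h | h
    exacts [H _ _ h, (H _ _ h).symm]
  intro a b hab
  have hdiff : Differentiable ℝ u := hu.differentiable (by simp)
  have hgoal : ∀ t : ℝ,
      (∫ θ in (0:ℝ)..(2 * Real.pi),
        (‖fderiv ℝ u (t, θ) (1, 0)‖ ^ 2 - ‖fderiv ℝ u (t, θ) (0, 1)‖ ^ 2))
      = ∫ θ in (0:ℝ)..(2 * Real.pi), cre_ff u (t, θ) := fun t => rfl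
  rw [hgoal a, hgoal b]
  have hcont_ft : Continuous (cre_ft u) := cre_ft_cont hu
  -- FTC in `t`
  have step1 : ∀ θ : ℝ, cre_ff u (b, θ) - cre_ff u (a, θ) = ∫ t in a..b, cre_ft u (t, θ) := by
    intro θ
    rw [intervalIntegral.integral_eq_sub_of_hasDerivAt
      (fun t _ => cre_hasDerivAt_ff hu t θ)
      ((hcont_ft.comp (continuous_id.prodMk continuous_const)).intervalIntegrable a b)]
  -- inner θ-integral vanishes
  have step4 : ∀ t : ℝ, (∫ θ in (0:ℝ)..(2 * Real.pi), cre_ft u (t, θ)) = 0 := by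
    intro t
    have heq : (∫ θ in (0:ℝ)..(2 * Real.pi), cre_ft u (t, θ))
        = ∫ θ in (0:ℝ)..(2 * Real.pi), cre_hth u (t, θ) := by
      congr 1
      funext θ
      exact cre_ft_eq_hth hu horth (t, θ)
    rw [heq, intervalIntegral.integral_eq_sub_of_hasDerivAt
      (fun θ _ => cre_hasDerivAt_hh hu t θ)
      (((cre_hth_cont hu).comp (continuous_const.prodMk continuous_id)).intervalIntegrable
        0 (2 * Real.pi)),
      cre_hh_per hdiff hper t, sub_self]
  -- integrability of the slices of `cre_ff`
  have hffint : ∀ t : ℝ, IntervalIntegrable (fun θ => cre_ff u (t, θ)) volume 0 (2 * Real.pi) :=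
    fun t => ((cre_ff_cont hu).comp (continuous_const.prodMk continuous_id)).intervalIntegrable
      0 (2 * Real.pi)
  -- Fubini
  have swap : (∫ θ in (0:ℝ)..(2 * Real.pi), ∫ t in a..b, cre_ft u (t, θ))
      = ∫ t in a..b, ∫ θ in (0:ℝ)..(2 * Real.pi), cre_ft u (t, θ) := by
    rw [intervalIntegral.integral_of_le hab, intervalIntegral.integral_of_le Real.two_pi_pos.le]
    simp_rw [intervalIntegral.integral_of_le hab, intervalIntegral.integral_of_le Real.two_pi_pos.le]
    refine MeasureTheory.integral_integral_swap ?_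
    rw [Measure.prod_restrict, ← Measure.volume_eq_prod]
    have hc : Continuous fun q : ℝ × ℝ => cre_ft u (q.2, q.1) := hcont_ft.comp continuous_swap
    have hint : IntegrableOn (fun q : ℝ × ℝ => cre_ft u (q.2, q.1))
        (Set.Icc (0 : ℝ) (2 * Real.pi) ×ˢ Set.Icc a b) volume :=
      hc.locallyIntegrable.integrableOn_isCompact (isCompact_Icc.prod isCompact_Icc)
    exact hint.mono_set (Set.prod_mono Set.Ioc_subset_Icc_self Set.Ioc_subset_Icc_self)
  have comb : (∫ θ in (0:ℝ)..(2 * Real.pi), cre_ff u (b, θ))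
      - (∫ θ in (0:ℝ)..(2 * Real.pi), cre_ff u (a, θ))
      = ∫ θ in (0:ℝ)..(2 * Real.pi), (cre_ff u (b, θ) - cre_ff u (a, θ)) :=
    (intervalIntegral.integral_sub (hffint b) (hffint a)).symm
  have final : (∫ θ in (0:ℝ)..(2 * Real.pi), cre_ff u (b, θ))
      - (∫ θ in (0:ℝ)..(2 * Real.pi), cre_ff u (a, θ)) = 0 := by
    rw [comb]
    have : (∫ θ in (0:ℝ)..(2 * Real.pi), (cre_ff u (b, θ) - cre_ff u (a, θ)))
        = ∫ θ in (0:ℝ)..(2 * Real.pi), ∫ t in a..b, cre_ft u (t, θ) := by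
      congr 1
      funext θ
      exact step1 θ
    rw [this, swap]
    simp only [step4]
    simp
  linarith [final]
end

section
/- Let K be a positive integer and let u : ℝ × ℝ → ℝ^K be a smooth map which is 2π-periodic in its second variable. Suppose that at every point ⟨∂²u/∂t² + ∂²u/∂θ², ∂u/∂θ⟩ = 0, where ⟨·,·⟩ is the Euclidean inner product on ℝ^K. Then the function t ↦ ∫₀^{2π} ⟨∂u/∂t(t,θ), ∂u/∂θ(t,θ)⟩ dθ is constant. -/
open Real

open MeasureTheory intervalIntegral Set

open scoped RealInnerProductSpace

/-- Imaginary part of Lemma 3.2: for a smooth map `u : ℝ × ℝ → ℝ^K`, `2π`-periodic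
in the second variable, whose Laplacian `∂²u/∂t² + ∂²u/∂θ²` is everywhere
orthogonal to `∂u/∂θ`, the function `t ↦ ∫₀^{2π} ⟨u_t, u_θ⟩ dθ` is constant. -/
theorem constancy_of_im_beta
    (K : ℕ) (hK : 0 < K)
    (u : ℝ × ℝ → EuclideanSpace ℝ (Fin K))
    (hu : ContDiff ℝ (⊤ : ℕ∞) u)
    (hper : ∀ t θ : ℝ, u (t, θ + 2 * Real.pi) = u (t, θ))
    (horth : ∀ p : ℝ × ℝ,
      (inner ℝ
        (fderiv ℝ (fun q => fderiv ℝ u q (1, 0)) p (1, 0)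
          + fderiv ℝ (fun q => fderiv ℝ u q (0, 1)) p (0, 1))
        (fderiv ℝ u p (0, 1)) : ℝ) = 0) :
    ∀ t₁ t₂ : ℝ,
      (∫ θ in (0:ℝ)..(2 * Real.pi),
        (inner ℝ (fderiv ℝ u (t₁, θ) (1, 0)) (fderiv ℝ u (t₁, θ) (0, 1)) : ℝ))
      = ∫ θ in (0:ℝ)..(2 * Real.pi),
        (inner ℝ (fderiv ℝ u (t₂, θ) (1, 0)) (fderiv ℝ u (t₂, θ) (0, 1)) : ℝ) := by
  set f1 : ℝ × ℝ → (ℝ × ℝ) →L[ℝ] EuclideanSpace ℝ (Fin K) := fderiv ℝ u with hf1def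
  have hf1 : ContDiff ℝ (⊤ : ℕ∞) f1 := hu.fderiv_right (by simp)
  set f2 : ℝ × ℝ → (ℝ × ℝ) →L[ℝ] (ℝ × ℝ) →L[ℝ] EuclideanSpace ℝ (Fin K) := fderiv ℝ f1 with hf2def
  have hf2 : ContDiff ℝ (⊤ : ℕ∞) f2 := hf1.fderiv_right (by simp)
  have hf2p : ∀ p, HasFDerivAt f1 (f2 p) p := fun p =>
    (hf1.differentiable (by simp) p).hasFDerivAt
  -- derivative of `fun q => f1 q v`
  have hutv : ∀ (v : ℝ × ℝ) (p : ℝ × ℝ),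
      HasFDerivAt (fun q => f1 q v)
        ((ContinuousLinearMap.apply ℝ (EuclideanSpace ℝ (Fin K)) v).comp (f2 p)) p := fun v p =>
    (ContinuousLinearMap.apply ℝ (EuclideanSpace ℝ (Fin K)) v).hasFDerivAt.comp p (hf2p p)
  -- rewrite horth
  have horth' : ∀ p : ℝ × ℝ,
      ⟪f2 p (1,0) (1,0) + f2 p (0,1) (0,1), f1 p (0,1)⟫ = 0 := by
    intro p
    have h1 : fderiv ℝ (fun q => fderiv ℝ u q ((1:ℝ),(0:ℝ))) p (1,0) = f2 p (1,0) (1,0) := by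
      rw [(hutv (1,0) p).fderiv]; rfl
    have h2 : fderiv ℝ (fun q => fderiv ℝ u q ((0:ℝ),(1:ℝ))) p (0,1) = f2 p (0,1) (0,1) := by
      rw [(hutv (0,1) p).fderiv]; rfl
    have := horth p
    rw [h1, h2] at this
    exact this
  -- Clairaut
  have hsymm : ∀ p : ℝ × ℝ, ∀ v w, f2 p v w = f2 p w v := fun p v w =>
    (hu.contDiffAt.isSymmSndFDerivAt (by rw [minSmoothness_of_isRCLikeNormedField]; exact WithTop.coe_le_coe.mpr le_top)) v w
  -- the t-derivative of the integrand
  set d : ℝ × ℝ → ℝ := fun p => ⟪f1 p (1,0), f2 p (1,0) (0,1)⟫ + ⟪f2 p (1,0) (1,0), f1 p (0,1)⟫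
    with hddef
  -- smoothness of auxiliary functions
  have hcd : ∀ v w : ℝ × ℝ, Continuous fun p => f2 p v w := fun v w =>
    (((hf2.clm_apply contDiff_const).clm_apply contDiff_const).continuous)
  have hcf : ∀ v : ℝ × ℝ, Continuous fun p => f1 p v := fun v =>
    ((hf1.clm_apply contDiff_const).continuous)
  have hdc : Continuous d := by
    apply Continuous.add
    · exact (hcf (1,0)).inner (hcd (1,0) (0,1))
    · exact (hcd (1,0) (1,0)).inner (hcf (0,1))
  -- derivatives along lines
  have hlinet : ∀ (θ t : ℝ), HasDerivAt (fun s : ℝ => ((s, θ) : ℝ × ℝ)) ((1:ℝ),(0:ℝ)) t :=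
    fun θ t => (hasDerivAt_id t).prodMk (hasDerivAt_const t θ)
  have hlineθ : ∀ (t θ : ℝ), HasDerivAt (fun s : ℝ => ((t, s) : ℝ × ℝ)) ((0:ℝ),(1:ℝ)) θ :=
    fun t θ => (hasDerivAt_const θ t).prodMk (hasDerivAt_id θ)
  have hD : ∀ (v : ℝ × ℝ) (θ t : ℝ),
      HasDerivAt (fun s => f1 (s, θ) v) (f2 (t, θ) (1,0) v) t := by
    intro v θ t
    exact (hutv v (t, θ)).comp_hasDerivAt t (hlinet θ t)
  have hDθ : ∀ (v : ℝ × ℝ) (t θ : ℝ),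
      HasDerivAt (fun s => f1 (t, s) v) (f2 (t, θ) (0,1) v) θ := by
    intro v t θ
    exact (hutv v (t, θ)).comp_hasDerivAt θ (hlineθ t θ)
  -- t-derivative of h
  have hht : ∀ (θ t : ℝ),
      HasDerivAt (fun s => ⟪f1 (s, θ) (1,0), f1 (s, θ) (0,1)⟫) (d (t, θ)) t := by
    intro θ t
    exact (hD (1,0) θ t).inner ℝ (hD (0,1) θ t)
  -- θ-derivative of g, and d = (1/2) ∂θ g
  set g : ℝ × ℝ → ℝ := fun p => ⟪f1 p (1,0), f1 p (1,0)⟫ - ⟪f1 p (0,1), f1 p (0,1)⟫ with hgdef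
  have hgθ : ∀ (t θ : ℝ), HasDerivAt (fun s => g (t, s)) (2 * d (t, θ)) θ := by
    intro t θ
    have h1 := ((hDθ (1,0) t θ).inner ℝ (hDθ (1,0) t θ))
    have h2 := ((hDθ (0,1) t θ).inner ℝ (hDθ (0,1) t θ))
    have := h1.sub h2
    convert this using 1
    · rfl
    · rfl
    · rfl
    have e1 : f2 (t,θ) (1,0) (0,1) = f2 (t,θ) (0,1) (1,0) := hsymm _ _ _
    have e2 : ⟪f2 (t,θ) (1,0) (1,0), f1 (t,θ) (0,1)⟫ = - ⟪f2 (t,θ) (0,1) (0,1), f1 (t,θ) (0,1)⟫ := by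
      have := horth' (t, θ)
      rw [inner_add_left] at this
      linarith
    simp only [hddef, e1, e2]
    rw [real_inner_comm (f1 (t,θ) (1,0)) (f2 (t,θ) (0,1) (1,0)),
        real_inner_comm (f1 (t,θ) (0,1)) (f2 (t,θ) (0,1) (0,1))]
    ring
  -- periodicity of f1
  have hperf : ∀ p : ℝ × ℝ, f1 (p + ((0:ℝ), 2 * Real.pi)) = f1 p := by
    intro p
    have hT : HasFDerivAt (fun q : ℝ × ℝ => q + ((0:ℝ), 2 * Real.pi))
        (ContinuousLinearMap.id ℝ (ℝ × ℝ)) p := (hasFDerivAt_id p).add_const _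
    have hcomp := ((hu.differentiable (by simp) _).hasFDerivAt).comp p hT
    have hUeq : (u ∘ fun q : ℝ × ℝ => q + ((0:ℝ), 2 * Real.pi)) = u := by
      funext q
      simp only [Function.comp_apply, Prod.mk_add_mk]
      have : q + ((0:ℝ), 2 * Real.pi) = (q.1, q.2 + 2 * Real.pi) := by
        ext <;> simp
      rw [this, hper q.1 q.2]
    rw [hUeq] at hcomp
    have := hcomp.fderiv
    rw [← hf1def, ContinuousLinearMap.comp_id] at this
    exact this.symm
  have hperf' : ∀ (t θ : ℝ), f1 (t, θ + 2 * Real.pi) = f1 (t, θ) := by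
    intro t θ
    have := hperf (t, θ)
    simpa [Prod.mk_add_mk] using this
  -- main computation
  have key : ∀ t₁ t₂ : ℝ, t₁ ≤ t₂ →
      (∫ θ in (0:ℝ)..(2 * Real.pi), ⟪f1 (t₁, θ) (1,0), f1 (t₁, θ) (0,1)⟫)
      = ∫ θ in (0:ℝ)..(2 * Real.pi), ⟪f1 (t₂, θ) (1,0), f1 (t₂, θ) (0,1)⟫ := by
    intro t₁ t₂ hle
    have hcont : ∀ t : ℝ, Continuous fun θ : ℝ => ⟪f1 (t, θ) (1,0), f1 (t, θ) (0,1)⟫ := by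
      intro t
      exact (((hcf (1,0)).inner (hcf (0,1)))).comp (continuous_const.prodMk continuous_id)
    symm
    rw [← sub_eq_zero, ← intervalIntegral.integral_sub
      ((hcont t₂).intervalIntegrable _ _) ((hcont t₁).intervalIntegrable _ _)]
    have step2 : ∀ θ : ℝ,
        ⟪f1 (t₂, θ) (1,0), f1 (t₂, θ) (0,1)⟫ - ⟪f1 (t₁, θ) (1,0), f1 (t₁, θ) (0,1)⟫
        = ∫ t in t₁..t₂, d (t, θ) := by
      intro θ
      rw [intervalIntegral.integral_eq_sub_of_hasDerivAt (fun t _ => hht θ t)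
        ((hdc.comp (continuous_id.prodMk continuous_const)).intervalIntegrable _ _)]
    rw [intervalIntegral.integral_congr (g := fun θ => ∫ t in t₁..t₂, d (t, θ))
      (fun θ _ => step2 θ)]
    -- Fubini
    have h2pi : (0:ℝ) ≤ 2 * Real.pi := by positivity
    have hint : Integrable (Function.uncurry fun θ t => d (t, θ))
        ((volume.restrict (Ioc (0:ℝ) (2 * Real.pi))).prod (volume.restrict (Ioc t₁ t₂))) := by
      rw [Measure.prod_restrict]
      exact (((hdc.comp continuous_swap).continuousOn).integrableOn_compact
        (isCompact_Icc.prod isCompact_Icc)).mono_set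
        (Set.prod_mono Ioc_subset_Icc_self Ioc_subset_Icc_self)
    calc (∫ θ in (0:ℝ)..(2 * Real.pi), ∫ t in t₁..t₂, d (t, θ))
        = ∫ θ in Ioc (0:ℝ) (2 * Real.pi), ∫ t in Ioc t₁ t₂, d (t, θ) := by
          rw [intervalIntegral.integral_of_le h2pi]
          congr 1
          funext θ
          rw [intervalIntegral.integral_of_le hle]
      _ = ∫ t in Ioc t₁ t₂, ∫ θ in Ioc (0:ℝ) (2 * Real.pi), d (t, θ) := by
          exact MeasureTheory.integral_integral_swap hint
      _ = 0 := by
          have inner0 : ∀ t : ℝ, (∫ θ in Ioc (0:ℝ) (2 * Real.pi), d (t, θ)) = 0 := by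
            intro t
            rw [← intervalIntegral.integral_of_le h2pi]
            have hd2 : (∫ θ in (0:ℝ)..(2 * Real.pi), 2 * d (t, θ)) = 0 := by
              rw [intervalIntegral.integral_eq_sub_of_hasDerivAt (fun θ _ => hgθ t θ)
                (((continuous_const.mul (hdc.comp
                  (continuous_const.prodMk continuous_id)))).intervalIntegrable _ _)]
              have hp0 := hperf' t 0
              rw [zero_add] at hp0
              simp only [hgdef, hp0]
              ring
            rw [intervalIntegral.integral_const_mul] at hd2
            linarith
          simp only [inner0, MeasureTheory.integral_zero]
  intro t₁ t₂
  rcases le_total t₁ t₂ with h | h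
  · exact key t₁ t₂ h
  · exact (key t₂ t₁ h).symm
end

section
/- Let (ε_k) be a sequence of positive reals with ε_k → 0, let (r_k) be a sequence in (0,1) such that r_k^{−2ε_k} → μ for some real μ (necessarily μ ≥ 1), let (c_k) be a sequence of positive reals with c_k → c for some c > 0, and let t > 0. Then (1 + c_k·ε_k·r_k^{−2t})^{ε_k} → μ^t as k → ∞. -/
/-!
Write `x_k = c_k ε_k r_k^{-2t}`. Since `0 ≤ x`, the base `1 + x` lies between `max 1 x` and
`2 · max 1 x`, so `(1 + x_k)^{ε_k}` is squeezed between `max 1 (x_k^{ε_k})` and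
`2^{ε_k} · max 1 (x_k^{ε_k})`, and `2^{ε_k} → 1`. It remains to see that
`x_k^{ε_k} = c_k^{ε_k} · ε_k^{ε_k} · (r_k^{-2ε_k})^t → 1 · 1 · μ^t`, and `μ^t ≥ 1` because
`r_k < 1` forces `μ ≥ 1`.
-/

open Filter Real Topology

namespace Real

lemma max_one_rpow_le_one_add_rpow {x e : ℝ} (hx : 0 ≤ x) (he : 0 ≤ e) :
    max 1 (x ^ e) ≤ (1 + x) ^ e :=
  max_le (one_le_rpow (by linarith) he) (rpow_le_rpow hx (by linarith) he)

lemma one_add_rpow_le_two_rpow_mul_max {x e : ℝ} (hx : 0 ≤ x) (he : 0 ≤ e) :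
    (1 + x) ^ e ≤ 2 ^ e * max 1 (x ^ e) :=
  calc (1 + x) ^ e ≤ (2 * max 1 x) ^ e := by
        gcongr
        linarith [le_max_left 1 x, le_max_right 1 x]
    _ = 2 ^ e * max 1 (x ^ e) := by
        rw [mul_rpow zero_le_two (by positivity), rpow_max zero_le_one hx he, one_rpow]

lemma tendsto_rpow_self_nhdsGT_zero : Tendsto (fun x : ℝ => x ^ x) (𝓝[>] 0) (𝓝 1) := by
  have hexp : Tendsto (fun x : ℝ => exp (x * log x)) (𝓝 0) (𝓝 1) :=
    continuous_mul_log.rexp.tendsto' 0 1 (by simp)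
  refine (hexp.mono_left nhdsWithin_le_nhds).congr' ?_
  filter_upwards [self_mem_nhdsWithin] with x hx
  rw [rpow_def_of_pos hx, mul_comm]

end Real

lemma Filter.Tendsto.one_add_rpow_of_rpow {α : Type*} {l : Filter α} {x e : α → ℝ} {L : ℝ}
    (h : Tendsto (fun a => x a ^ e a) l (𝓝 L)) (hL : 1 ≤ L)
    (hx : ∀ a, 0 ≤ x a) (he : ∀ a, 0 ≤ e a) (he0 : Tendsto e l (𝓝 0)) :
    Tendsto (fun a => (1 + x a) ^ e a) l (𝓝 L) := by
  have hmax : Tendsto (fun a => max 1 (x a ^ e a)) l (𝓝 L) := by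
    simpa [max_eq_right hL] using (tendsto_const_nhds (x := (1 : ℝ))).max h
  have hupper : Tendsto (fun a => 2 ^ e a * max 1 (x a ^ e a)) l (𝓝 L) := by
    simpa using (tendsto_const_nhds.rpow he0 (Or.inl two_ne_zero)).mul hmax
  exact tendsto_of_tendsto_of_tendsto_of_le_of_le hmax hupper
    (fun a => max_one_rpow_le_one_add_rpow (hx a) (he a))
    (fun a => one_add_rpow_le_two_rpow_mul_max (hx a) (he a))

/-- The key limit in the proof of Lemma 2.7: if `ε_k > 0`, `ε_k → 0`,
`r_k ∈ (0,1)` with `r_k^{−2ε_k} → μ`, `c_k > 0` with `c_k → c > 0` and `t > 0`,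
then `(1 + c_k·ε_k·r_k^{−2t})^{ε_k} → μ^t`. -/
theorem neck_energy_density_limit
    (ε r c : ℕ → ℝ) (μ c₀ t : ℝ)
    (hε : ∀ k, 0 < ε k)
    (hε0 : Tendsto ε atTop (𝓝 0))
    (hr : ∀ k, r k ∈ Set.Ioo (0:ℝ) 1)
    (hμ : Tendsto (fun k => r k ^ (-(2 * ε k))) atTop (𝓝 μ))
    (hc : ∀ k, 0 < c k)
    (hc0 : Tendsto c atTop (𝓝 c₀))
    (hc₀ : 0 < c₀)
    (ht : 0 < t) :
    Tendsto (fun k => (1 + c k * ε k * r k ^ (-(2 * t))) ^ (ε k)) atTop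
      (𝓝 (μ ^ t)) := by
  have hμ1 : 1 ≤ μ := ge_of_tendsto' hμ fun k =>
    one_le_rpow_of_pos_of_le_one_of_nonpos (hr k).1 (hr k).2.le (by linarith [hε k])
  have hsplit : ∀ k, (c k * ε k * r k ^ (-(2 * t))) ^ ε k =
      c k ^ ε k * ε k ^ ε k * (r k ^ (-(2 * ε k))) ^ t := fun k => by
    rw [mul_rpow (by positivity [hc k, hε k]) (rpow_nonneg (hr k).1.le _),
      mul_rpow (hc k).le (hε k).le, ← rpow_mul (hr k).1.le, ← rpow_mul (hr k).1.le]
    ring_nf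
  have hεε : Tendsto (fun k => ε k ^ ε k) atTop (𝓝 1) := tendsto_rpow_self_nhdsGT_zero.comp
    (tendsto_nhdsWithin_of_tendsto_nhds_of_eventually_within _ hε0 (.of_forall hε))
  have hpow : Tendsto (fun k => (c k * ε k * r k ^ (-(2 * t))) ^ ε k) atTop (𝓝 (μ ^ t)) := by
    simpa [hsplit] using
      ((hc0.rpow hε0 (.inl hc₀.ne')).mul hεε).mul (hμ.rpow_const (.inr ht.le))
  exact hpow.one_add_rpow_of_rpow (one_le_rpow hμ1 ht.le)
    (fun k => by positivity [hc k, hε k, (hr k).1]) (fun k => (hε k).le) hε0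
end
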